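/- For every real number x, the exponential generating function of the type D Bell numbers satisfies Σ_{n≥0} D(n) · x^n / n! = exp((e^(2x) - 1)/2) · (e^x - x), where the series on the left converges. -/

import Mathlib

/-- The classical Stirling numbers of the second kind, defined by the recurrence
`S(n,k) = S(n-1,k-1) + k·S(n-1,k)` with `S(0,k) = δ_{0,k}`. -/
def stirling2 : ℕ → ℕ → ℕ
  | 0, 0 => 1
  | 0, _ + 1 => 0
  | _ + 1, 0 => 0
  | n + 1, k + 1 => stirling2 n k + (k + 1) * stirling2 n (k + 1)

/-- The type `B` Stirling numbers of the second kind, defined by the recurrence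
`S_B(n,k) = S_B(n-1,k-1) + (2k+1)·S_B(n-1,k)` with `S_B(0,k) = δ_{0,k}`. -/
def stirlingB : ℕ → ℕ → ℕ
  | 0, 0 => 1
  | 0, _ + 1 => 0
  | n + 1, 0 => stirlingB n 0
  | n + 1, k + 1 => stirlingB n k + (2 * (k + 1) + 1) * stirlingB n (k + 1)

/-- The type `B` Bell numbers: `B(n) = Σ_{k=0}^{n} S_B(n,k)`. -/
def bellB (n : ℕ) : ℕ := ∑ k ∈ Finset.range (n + 1), stirlingB n k

/-- The type `D` Stirling numbers of the second kind:
`S_D(n,k) = S_B(n,k) - n·2^(n-1-k)·S(n-1,k)` for `n ≥ 1` and `0 ≤ k ≤ n-1`,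
with `S_D(n,n) = 1` and `S_D(0,k) = δ_{0,k}`. -/
def stirlingD (n k : ℕ) : ℤ :=
  if n = 0 then (if k = 0 then 1 else 0)
  else if k = n then 1
  else if k ≤ n - 1 then
    (stirlingB n k : ℤ) - (n : ℤ) * 2 ^ (n - 1 - k) * (stirling2 (n - 1) k : ℤ)
  else 0

/-- The type `D` Bell numbers: `D(n) = Σ_{k=0}^{n} S_D(n,k)`. -/
def bellD (n : ℕ) : ℤ := ∑ k ∈ Finset.range (n + 1), stirlingD n k

open Finset

lemma stirling2_eq_zero : ∀ {n k : ℕ}, n < k → stirling2 n k = 0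
  | 0, 0, h => by omega
  | 0, k+1, _ => rfl
  | n+1, 0, h => by omega
  | n+1, k+1, h => by
    simp [stirling2, stirling2_eq_zero (by omega : n < k),
      stirling2_eq_zero (by omega : n < k+1)]

lemma stirlingB_eq_zero : ∀ {n k : ℕ}, n < k → stirlingB n k = 0
  | 0, 0, h => by omega
  | 0, k+1, _ => rfl
  | n+1, 0, h => by omega
  | n+1, k+1, h => by
    simp [stirlingB, stirlingB_eq_zero (by omega : n < k),
      stirlingB_eq_zero (by omega : n < k+1)]

lemma stirlingB_self (n : ℕ) : stirlingB n n = 1 := by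
  induction n with
  | zero => rfl
  | succ n ih => simp [stirlingB, ih, stirlingB_eq_zero (Nat.lt_succ_self n)]

lemma desc_mul (j k : ℕ) :
    j * j.descFactorial k = j.descFactorial (k+1) + k * j.descFactorial k := by
  rcases le_or_gt k j with h | h
  · rw [Nat.descFactorial_succ, ← add_mul, Nat.sub_add_cancel h]
  · rw [Nat.descFactorial_eq_zero_iff_lt.2 h,
      Nat.descFactorial_eq_zero_iff_lt.2 (by omega : j < k+1)]
    simp

lemma pow_eq_sum_stirling2 (m j : ℕ) :
    j ^ m = ∑ k ∈ range (m+1), stirling2 m k * j.descFactorial k := by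
  induction m with
  | zero => simp [stirling2]
  | succ m ih =>
    have key : ∀ k, stirling2 m k * j.descFactorial k * j
        = stirling2 m k * j.descFactorial (k+1) + k * stirling2 m k * j.descFactorial k := by
      intro k
      calc stirling2 m k * j.descFactorial k * j
          = stirling2 m k * (j * j.descFactorial k) := by ring
        _ = stirling2 m k * (j.descFactorial (k+1) + k * j.descFactorial k) := by rw [desc_mul]
        _ = _ := by ring
    rw [pow_succ, ih, Finset.sum_mul]
    simp only [key]
    rw [Finset.sum_add_distrib,
      Finset.sum_range_succ' (fun k => stirling2 (m+1) k * j.descFactorial k) (m+1)]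
    have hsh : ∑ k ∈ range (m+1), (k : ℕ) * stirling2 m k * j.descFactorial k
        = ∑ k ∈ range (m+1), (k+1) * stirling2 m (k+1) * j.descFactorial (k+1) := by
      have := Finset.sum_range_succ'
        (fun k => k * stirling2 m k * j.descFactorial k) (m+1)
      rw [Finset.sum_range_succ] at this
      rw [stirling2_eq_zero (Nat.lt_succ_self m)] at this
      simp only [zero_mul, mul_zero, add_zero, zero_add] at this
      exact this
    rw [hsh]
    have h0 : stirling2 (m+1) 0 = 0 := rfl
    rw [h0]
    simp only [stirling2, zero_mul]
    rw [← Finset.sum_add_distrib]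
    rw [add_zero]
    exact Finset.sum_congr rfl fun k _ => by ring

lemma powB_eq_sum_stirlingB (n j : ℕ) :
    (2*j+1) ^ n = ∑ k ∈ range (n+1), stirlingB n k * (2^k * j.descFactorial k) := by
  induction n with
  | zero => simp [stirlingB]
  | succ n ih =>
    have key : ∀ k, stirlingB n k * (2^k * j.descFactorial k) * (2*j+1)
        = stirlingB n k * (2^(k+1) * j.descFactorial (k+1))
          + (2*k+1) * stirlingB n k * (2^k * j.descFactorial k) := by
      intro k
      rcases le_or_gt k j with h | h
      · have h2 : 2*j+1 = 2*(j-k)+(2*k+1) := by omega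
        rw [Nat.descFactorial_succ]
        calc stirlingB n k * (2^k * j.descFactorial k) * (2*j+1)
            = stirlingB n k * (2^k * j.descFactorial k) * (2*(j-k)+(2*k+1)) := by rw [h2]
          _ = _ := by ring
      · rw [Nat.descFactorial_eq_zero_iff_lt.2 h,
          Nat.descFactorial_eq_zero_iff_lt.2 (by omega : j < k+1)]
        simp
    rw [pow_succ, ih, Finset.sum_mul]
    simp only [key]
    rw [Finset.sum_add_distrib,
      Finset.sum_range_succ' (fun k => stirlingB (n+1) k * (2^k * j.descFactorial k)) (n+1)]
    have hsh : ∑ k ∈ range (n+1), (2*k+1) * stirlingB n k * (2^k * j.descFactorial k)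
        = (∑ k ∈ range (n+1),
            (2*(k+1)+1) * stirlingB n (k+1) * (2^(k+1) * j.descFactorial (k+1)))
          + stirlingB n 0 := by
      have h1 := Finset.sum_range_succ'
        (fun k => (2*k+1) * stirlingB n k * (2^k * j.descFactorial k)) n
      rw [Finset.sum_range_succ
        (fun k => (2*(k+1)+1) * stirlingB n (k+1) * (2^(k+1) * j.descFactorial (k+1))) n]
      rw [h1, stirlingB_eq_zero (Nat.lt_succ_self n)]
      simp
    rw [hsh]
    have h0 : stirlingB (n+1) 0 = stirlingB n 0 := rfl
    rw [h0]
    simp only [stirlingB, pow_zero, Nat.descFactorial_zero, one_mul, mul_one]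
    rw [← add_assoc, ← Finset.sum_add_distrib]
    congr 1
    exact Finset.sum_congr rfl fun k _ => by ring

def Tm (m : ℕ) : ℕ := ∑ k ∈ range (m+1), 2^(m-k) * stirling2 m k

lemma bellD_succ (m : ℕ) :
    bellD (m+1) = (bellB (m+1) : ℤ) - (m+1 : ℤ) * (Tm m : ℤ) := by
  have hB : (bellB (m+1) : ℤ) = (∑ k ∈ range (m+1), (stirlingB (m+1) k : ℤ)) + 1 := by
    unfold bellB
    push_cast
    rw [Finset.sum_range_succ, stirlingB_self]
    push_cast
    ring
  have h1 : stirlingD (m+1) (m+1) = 1 := by simp [stirlingD]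
  have h2 : ∀ k ∈ range (m+1), stirlingD (m+1) k
      = (stirlingB (m+1) k : ℤ) - ((m:ℤ)+1) * 2^(m-k) * (stirling2 m k : ℤ) := by
    intro k hk
    simp only [Finset.mem_range] at hk
    unfold stirlingD
    rw [if_neg (by omega), if_neg (by omega), if_pos (by omega : k ≤ m + 1 - 1)]
    simp only [Nat.add_sub_cancel]
    push_cast
    ring
  unfold bellD
  rw [Finset.sum_range_succ, h1, Finset.sum_congr rfl h2, hB]
  unfold Tm
  push_cast
  rw [Finset.sum_sub_distrib]
  have h3 : ∑ k ∈ range (m+1), ((m:ℤ)+1) * 2^(m-k) * (stirling2 m k : ℤ)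
      = ((m:ℤ)+1) * ∑ k ∈ range (m+1), (2:ℤ)^(m-k) * (stirling2 m k : ℤ) := by
    rw [Finset.mul_sum]
    exact Finset.sum_congr rfl fun k _ => by ring
  rw [h3]
  ring

open Real in
lemma real_exp_tsum (y : ℝ) : Real.exp y = ∑' n : ℕ, y ^ n / n.factorial := by
  rw [Real.exp_eq_exp_ℝ, NormedSpace.exp_eq_tsum_div]

lemma summable_pow_div_two_pow_factorial (c : ℝ) :
    Summable (fun j : ℕ => c ^ j / (2^j * j.factorial)) := by
  have h : ∀ j : ℕ, c ^ j / (2^j * (j.factorial:ℝ)) = (c/2)^j / j.factorial := by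
    intro j; rw [div_pow]; ring
  simp only [h]
  exact Real.summable_pow_div_factorial _

lemma tsum_pow_div_two_pow_factorial (c : ℝ) :
    ∑' j : ℕ, c ^ j / (2^j * j.factorial) = Real.exp (c/2) := by
  have h : ∀ j : ℕ, c ^ j / (2^j * (j.factorial:ℝ)) = (c/2)^j / j.factorial := by
    intro j; rw [div_pow]; ring
  simp only [h]
  rw [real_exp_tsum]

lemma descFactorial_shift (i k : ℕ) :
    (((i+k).descFactorial k : ℝ)) / (2^(i+k) * (i+k).factorial)
      = (1/2)^k * ((1/2)^i / i.factorial) := by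
  have hnat := Nat.factorial_mul_descFactorial (Nat.le_add_left k i)
  rw [Nat.add_sub_cancel] at hnat
  have hfact : (i.factorial : ℝ) * ((i+k).descFactorial k : ℝ) = ((i+k).factorial : ℝ) := by
    exact_mod_cast congrArg (Nat.cast : ℕ → ℝ) hnat
  have h1 : (((i+k).descFactorial k : ℝ)) / (2^(i+k) * (i+k).factorial)
      = 1 / (2^(i+k) * i.factorial) := by
    rw [div_eq_div_iff (by positivity) (by positivity)]
    calc ((i+k).descFactorial k : ℝ) * (2^(i+k) * i.factorial)
        = 2^(i+k) * ((i.factorial : ℝ) * ((i+k).descFactorial k : ℝ)) := by ring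
      _ = 2^(i+k) * ((i+k).factorial : ℝ) := by rw [hfact]
      _ = 1 * (2^(i+k) * ((i+k).factorial : ℝ)) := by ring
  rw [h1, pow_add]
  field_simp
  rw [one_div, inv_pow, inv_pow]; field_simp

lemma summable_descFactorial (k : ℕ) :
    Summable (fun j : ℕ => (j.descFactorial k : ℝ) / (2^j * j.factorial)) := by
  have hinj : Function.Injective (fun i : ℕ => i + k) := add_left_injective k
  have hsupp : ∀ j ∉ Set.range (fun i : ℕ => i + k),
      (j.descFactorial k : ℝ) / (2^j * j.factorial) = 0 := by
    intro j hj
    have hlt : j < k := by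
      by_contra h
      exact hj ⟨j - k, show j - k + k = j by omega⟩
    simp [Nat.descFactorial_eq_zero_iff_lt.2 hlt]
  rw [← hinj.summable_iff hsupp]
  have he : ((fun j : ℕ => (j.descFactorial k : ℝ) / (2^j * j.factorial)) ∘ fun i => i + k)
      = fun i : ℕ => (1/2 : ℝ)^k * ((1/2 : ℝ)^i / (i.factorial : ℝ)) := by
    funext i
    exact descFactorial_shift i k
  rw [he]
  exact (Real.summable_pow_div_factorial _).mul_left _

lemma tsum_descFactorial (k : ℕ) :
    ∑' j : ℕ, (j.descFactorial k : ℝ) / (2^j * j.factorial) = Real.exp (1/2) / 2^k := by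
  have hinj : Function.Injective (fun i : ℕ => i + k) := add_left_injective k
  have hsupp : Function.support (fun j : ℕ => (j.descFactorial k : ℝ) / (2^j * j.factorial))
      ⊆ Set.range (fun i : ℕ => i + k) := by
    intro j hj
    by_contra h
    have hlt : j < k := by
      by_contra h'
      exact h ⟨j - k, show j - k + k = j by omega⟩
    apply hj
    simp [Nat.descFactorial_eq_zero_iff_lt.2 hlt]
  rw [← hinj.tsum_eq hsupp]
  simp only [descFactorial_shift]
  rw [tsum_mul_left, ← real_exp_tsum]
  rw [div_pow, one_pow, one_div, inv_mul_eq_div]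

lemma summable_dobinski_B (n : ℕ) :
    Summable (fun j : ℕ => (((2*j+1)^n : ℕ) : ℝ) / (2^j * j.factorial)) := by
  have h : ∀ j : ℕ, (((2*j+1)^n : ℕ) : ℝ) / (2^j * j.factorial)
      = ∑ k ∈ range (n+1),
          (stirlingB n k : ℝ) * 2^k * ((j.descFactorial k : ℝ) / (2^j * j.factorial)) := by
    intro j
    rw [powB_eq_sum_stirlingB n j]
    push_cast
    rw [Finset.sum_div]
    exact Finset.sum_congr rfl fun k _ => by ring
  simp only [h]
  exact summable_sum (fun k _ => ((summable_descFactorial k).mul_left _))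

lemma tsum_dobinski_B (n : ℕ) :
    ∑' j : ℕ, (((2*j+1)^n : ℕ) : ℝ) / (2^j * j.factorial)
      = Real.exp (1/2) * (bellB n : ℝ) := by
  have h : ∀ j : ℕ, (((2*j+1)^n : ℕ) : ℝ) / (2^j * j.factorial)
      = ∑ k ∈ range (n+1),
          (stirlingB n k : ℝ) * 2^k * ((j.descFactorial k : ℝ) / (2^j * j.factorial)) := by
    intro j
    rw [powB_eq_sum_stirlingB n j]
    push_cast
    rw [Finset.sum_div]
    exact Finset.sum_congr rfl fun k _ => by ring
  simp only [h]
  rw [Summable.tsum_finsetSum (fun k _ => ((summable_descFactorial k).mul_left _))]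
  have hk : ∀ k ∈ range (n+1),
      ∑' j : ℕ, (stirlingB n k : ℝ) * 2^k * ((j.descFactorial k : ℝ) / (2^j * j.factorial))
        = (stirlingB n k : ℝ) * Real.exp (1/2) := by
    intro k _
    rw [tsum_mul_left, tsum_descFactorial]
    field_simp
  rw [Finset.sum_congr rfl hk]
  rw [← Finset.sum_mul]
  unfold bellB
  push_cast
  ring

lemma summable_dobinski_A (m : ℕ) :
    Summable (fun j : ℕ => (((2*j)^m : ℕ) : ℝ) / (2^j * j.factorial)) := by
  have h : ∀ j : ℕ, (((2*j)^m : ℕ) : ℝ) / (2^j * j.factorial)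
      = ∑ k ∈ range (m+1),
          (stirling2 m k : ℝ) * 2^m * ((j.descFactorial k : ℝ) / (2^j * j.factorial)) := by
    intro j
    rw [mul_pow, pow_eq_sum_stirling2 m j]
    push_cast
    rw [Finset.mul_sum, Finset.sum_div]
    exact Finset.sum_congr rfl fun k _ => by ring
  simp only [h]
  exact summable_sum (fun k _ => ((summable_descFactorial k).mul_left _))

lemma tsum_dobinski_A (m : ℕ) :
    ∑' j : ℕ, (((2*j)^m : ℕ) : ℝ) / (2^j * j.factorial)
      = Real.exp (1/2) * (Tm m : ℝ) := by
  have h : ∀ j : ℕ, (((2*j)^m : ℕ) : ℝ) / (2^j * j.factorial)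
      = ∑ k ∈ range (m+1),
          (stirling2 m k : ℝ) * 2^m * ((j.descFactorial k : ℝ) / (2^j * j.factorial)) := by
    intro j
    rw [mul_pow, pow_eq_sum_stirling2 m j]
    push_cast
    rw [Finset.mul_sum, Finset.sum_div]
    exact Finset.sum_congr rfl fun k _ => by ring
  simp only [h]
  rw [Summable.tsum_finsetSum (fun k _ => ((summable_descFactorial k).mul_left _))]
  have hk : ∀ k ∈ range (m+1),
      ∑' j : ℕ, (stirling2 m k : ℝ) * 2^m * ((j.descFactorial k : ℝ) / (2^j * j.factorial))
        = Real.exp (1/2) * ((2^(m-k) : ℕ) : ℝ) * (stirling2 m k : ℝ) := by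
    intro k hk
    simp only [Finset.mem_range] at hk
    rw [tsum_mul_left, tsum_descFactorial]
    have h2 : ((2^(m-k) : ℕ) : ℝ) = (2:ℝ)^m / (2:ℝ)^k := by
      push_cast
      rw [eq_div_iff (by positivity), ← pow_add]
      congr 1
      omega
    rw [h2]
    field_simp
  rw [Finset.sum_congr rfl hk]
  unfold Tm
  push_cast
  rw [Finset.mul_sum]
  exact Finset.sum_congr rfl fun k _ => by ring

lemma bellD_zero : bellD 0 = 1 := by simp [bellD, stirlingD]

lemma bellB_zero : bellB 0 = 1 := rfl

lemma summable_row (n : ℕ) :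
    Summable (fun j : ℕ =>
      ((((2*j+1)^n : ℕ) : ℝ) - (n:ℝ) * (((2*j)^(n-1) : ℕ) : ℝ)) / (2^j * j.factorial)) := by
  have h : ∀ j : ℕ,
      ((((2*j+1)^n : ℕ) : ℝ) - (n:ℝ) * (((2*j)^(n-1) : ℕ) : ℝ)) / (2^j * j.factorial)
      = (((2*j+1)^n : ℕ) : ℝ) / (2^j * j.factorial)
        - (n:ℝ) * ((((2*j)^(n-1) : ℕ) : ℝ) / (2^j * j.factorial)) := by
    intro j; ring
  simp only [h]
  exact (summable_dobinski_B n).sub ((summable_dobinski_A (n-1)).mul_left _)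

lemma tsum_row (n : ℕ) :
    ∑' j : ℕ, ((((2*j+1)^n : ℕ) : ℝ) - (n:ℝ) * (((2*j)^(n-1) : ℕ) : ℝ)) / (2^j * j.factorial)
      = Real.exp (1/2) * (bellD n : ℝ) := by
  have h : ∀ j : ℕ,
      ((((2*j+1)^n : ℕ) : ℝ) - (n:ℝ) * (((2*j)^(n-1) : ℕ) : ℝ)) / (2^j * j.factorial)
      = (((2*j+1)^n : ℕ) : ℝ) / (2^j * j.factorial)
        - (n:ℝ) * ((((2*j)^(n-1) : ℕ) : ℝ) / (2^j * j.factorial)) := by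
    intro j; ring
  simp only [h]
  rw [Summable.tsum_sub (summable_dobinski_B n) ((summable_dobinski_A (n-1)).mul_left _),
    tsum_mul_left, tsum_dobinski_B, tsum_dobinski_A]
  cases n with
  | zero => simp [bellD_zero, bellB_zero]
  | succ m =>
    have hD : (bellD (m+1) : ℝ) = (bellB (m+1) : ℝ) - ((m:ℝ)+1) * (Tm m : ℝ) := by
      exact_mod_cast congrArg (Int.cast : ℤ → ℝ) (bellD_succ m)
    rw [hD]
    simp only [Nat.add_sub_cancel]
    push_cast
    ring

lemma tsum_col_pow (c y : ℝ) :
    Summable (fun n : ℕ => c^n * y^n / n.factorial) ∧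
    ∑' n : ℕ, c^n * y^n / n.factorial = Real.exp (c*y) := by
  have h : ∀ n : ℕ, c^n * y^n / (n.factorial : ℝ) = (c*y)^n / n.factorial := by
    intro n; rw [mul_pow]
  simp only [h]
  exact ⟨Real.summable_pow_div_factorial _, (real_exp_tsum _).symm⟩

lemma tsum_col_deriv (c y : ℝ) :
    Summable (fun n : ℕ => (n:ℝ) * c^(n-1) * y^n / n.factorial) ∧
    ∑' n : ℕ, (n:ℝ) * c^(n-1) * y^n / n.factorial = y * Real.exp (c*y) := by
  set f : ℕ → ℝ := fun n => (n:ℝ) * c^(n-1) * y^n / n.factorial with hf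
  have hinj : Function.Injective (fun i : ℕ => i + 1) := add_left_injective 1
  have hzero : ∀ n ∉ Set.range (fun i : ℕ => i + 1), f n = 0 := by
    intro n hn
    have hn0 : n = 0 := by
      by_contra h
      exact hn ⟨n - 1, show n - 1 + 1 = n by omega⟩
    simp [f, hn0]
  have hcomp : (f ∘ fun i : ℕ => i + 1) = fun i : ℕ => y * ((c*y)^i / i.factorial) := by
    funext i
    simp only [f, Function.comp_apply, Nat.add_sub_cancel, Nat.factorial_succ]
    push_cast
    have h1 : ((i:ℝ) + 1) ≠ 0 := by positivity
    have h2 : (i.factorial : ℝ) ≠ 0 := by positivity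
    field_simp
    ring
  constructor
  · rw [← hinj.summable_iff hzero, hcomp]
    exact (Real.summable_pow_div_factorial _).mul_left _
  · have hsupp : Function.support f ⊆ Set.range (fun i : ℕ => i + 1) := by
      intro n hn
      by_contra h
      exact hn (hzero n h)
    rw [← hinj.tsum_eq hsupp]
    have : ∑' i : ℕ, f (i + 1) = ∑' i : ℕ, y * ((c*y)^i / i.factorial) :=
      tsum_congr fun i => congrFun hcomp i
    rw [this, tsum_mul_left, ← real_exp_tsum]

lemma exp_odd_split (j : ℕ) (y : ℝ) :
    Real.exp ((2*(j:ℝ)+1)*y) = Real.exp y * (Real.exp (2*y))^j := by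
  rw [← Real.exp_nat_mul, ← Real.exp_add]
  ring_nf

lemma exp_even_split (j : ℕ) (y : ℝ) :
    Real.exp ((2*(j:ℝ))*y) = (Real.exp (2*y))^j := by
  rw [← Real.exp_nat_mul]
  ring_nf

lemma sum_g1 (x : ℝ) : Summable (fun p : ℕ × ℕ =>
    ((2*(p.1:ℝ)+1)*(|x|))^p.2 / p.2.factorial / (2^p.1 * p.1.factorial)) := by
  have hnn : (0 : (ℕ×ℕ) → ℝ) ≤ fun p : ℕ × ℕ =>
      ((2*(p.1:ℝ)+1)*(|x|))^p.2 / p.2.factorial / (2^p.1 * p.1.factorial) := by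
    intro p
    positivity
  refine (summable_prod_of_nonneg hnn).mpr ⟨?_, ?_⟩
  · intro j
    show Summable fun n : ℕ => ((2*(j:ℝ)+1)*(|x|))^n / n.factorial / (2^j * j.factorial)
    exact (Real.summable_pow_div_factorial _).div_const _
  · show Summable fun j : ℕ =>
      ∑' n : ℕ, ((2*(j:ℝ)+1)*(|x|))^n / (n.factorial : ℝ) / (2^j * j.factorial)
    have hj : ∀ j : ℕ, (∑' n : ℕ, ((2*(j:ℝ)+1)*(|x|))^n / (n.factorial:ℝ) / (2^j * j.factorial))
        = Real.exp (|x|) * ((Real.exp (2*(|x|)))^j / (2^j * j.factorial)) := by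
      intro j
      rw [tsum_div_const, ← real_exp_tsum, exp_odd_split]
      ring
    simp only [hj]
    exact (summable_pow_div_two_pow_factorial (Real.exp (2*(|x|)))).mul_left _

lemma sum_g2 (x : ℝ) : Summable (fun p : ℕ × ℕ =>
    (p.2:ℝ) * (2*(p.1:ℝ))^(p.2-1) * (|x|)^p.2 / p.2.factorial / (2^p.1 * p.1.factorial)) := by
  have hnn : (0 : (ℕ×ℕ) → ℝ) ≤ fun p : ℕ × ℕ =>
      (p.2:ℝ) * (2*(p.1:ℝ))^(p.2-1) * (|x|)^p.2 / p.2.factorial / (2^p.1 * p.1.factorial) := by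
    intro p
    positivity
  refine (summable_prod_of_nonneg hnn).mpr ⟨?_, ?_⟩
  · intro j
    show Summable fun n : ℕ =>
      (n:ℝ) * (2*(j:ℝ))^(n-1) * (|x|)^n / n.factorial / (2^j * j.factorial)
    exact ((tsum_col_deriv (2*(j:ℝ)) (|x|)).1).div_const _
  · show Summable fun j : ℕ =>
      ∑' n : ℕ, (n:ℝ) * (2*(j:ℝ))^(n-1) * (|x|)^n / (n.factorial:ℝ) / (2^j * j.factorial)
    have hj : ∀ j : ℕ,
        (∑' n : ℕ, (n:ℝ) * (2*(j:ℝ))^(n-1) * (|x|)^n / (n.factorial:ℝ) / (2^j * j.factorial))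
        = (|x|) * ((Real.exp (2*(|x|)))^j / (2^j * j.factorial)) := by
      intro j
      rw [tsum_div_const, (tsum_col_deriv (2*(j:ℝ)) (|x|)).2]
      rw [show (2*(j:ℝ))*(|x|) = (j:ℝ) * (2*(|x|)) by ring, Real.exp_nat_mul]
      ring
    simp only [hj]
    exact (summable_pow_div_two_pow_factorial (Real.exp (2*(|x|)))).mul_left _

lemma sum_F1 (x : ℝ) : Summable (fun p : ℕ × ℕ =>
    (((2*p.2+1)^p.1 : ℕ) : ℝ) * x^p.1 / (p.1.factorial * (2^p.2 * p.2.factorial))) := by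
  apply Summable.of_norm
  have hswap : Summable (fun p : ℕ × ℕ =>
      ((2*(p.2:ℝ)+1)*(|x|))^p.1 / p.1.factorial / (2^p.2 * p.2.factorial)) :=
    ((Equiv.prodComm ℕ ℕ).summable_iff).mpr (sum_g1 x)
  apply hswap.congr
  intro p
  obtain ⟨n, j⟩ := p
  show ((2*(j:ℝ)+1)*(|x|))^n / n.factorial / (2^j * j.factorial)
    = ‖(((2*j+1)^n : ℕ) : ℝ) * x^n / (n.factorial * (2^j * j.factorial))‖
  rw [Real.norm_eq_abs, abs_div, abs_of_pos (by positivity :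
    (0:ℝ) < (n.factorial : ℝ) * (2^j * j.factorial)), abs_mul]
  push_cast
  rw [mul_pow, abs_pow, abs_pow, abs_of_nonneg (by positivity : (0:ℝ) ≤ 2*(j:ℝ)+1)]
  rw [div_div]

lemma sum_F2 (x : ℝ) : Summable (fun p : ℕ × ℕ =>
    (p.1:ℝ) * (((2*p.2)^(p.1-1) : ℕ) : ℝ) * x^p.1
      / (p.1.factorial * (2^p.2 * p.2.factorial))) := by
  apply Summable.of_norm
  have hswap : Summable (fun p : ℕ × ℕ =>
      (p.1:ℝ) * (2*(p.2:ℝ))^(p.1-1) * (|x|)^p.1 / p.1.factorial / (2^p.2 * p.2.factorial)) :=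
    ((Equiv.prodComm ℕ ℕ).summable_iff).mpr (sum_g2 x)
  apply hswap.congr
  intro p
  obtain ⟨n, j⟩ := p
  show (n:ℝ) * (2*(j:ℝ))^(n-1) * (|x|)^n / n.factorial / (2^j * j.factorial)
    = ‖(n:ℝ) * (((2*j)^(n-1) : ℕ) : ℝ) * x^n / (n.factorial * (2^j * j.factorial))‖
  rw [Real.norm_eq_abs, abs_div, abs_of_pos (by positivity :
    (0:ℝ) < (n.factorial : ℝ) * (2^j * j.factorial)), abs_mul, abs_mul]
  push_cast
  rw [abs_pow, abs_pow, Nat.abs_cast, abs_of_nonneg (by positivity : (0:ℝ) ≤ 2*(j:ℝ))]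
  rw [div_div]

/-- `Σ_{n≥0} D(n)·x^n/n! = exp((e^(2x) - 1)/2)·(e^x - x)`, the series converging. -/
theorem bellD_egf (x : ℝ) :
    Summable (fun n : ℕ => (bellD n : ℝ) * x ^ n / (n.factorial : ℝ)) ∧
    ∑' n : ℕ, (bellD n : ℝ) * x ^ n / (n.factorial : ℝ)
      = Real.exp ((Real.exp (2 * x) - 1) / 2) * (Real.exp x - x) := by
  have hene : Real.exp (1/2 : ℝ) ≠ 0 := ne_of_gt (Real.exp_pos _)
  set f : ℕ → ℕ → ℝ := fun n j =>
    ((((2*j+1)^n : ℕ) : ℝ) - (n:ℝ) * (((2*j)^(n-1) : ℕ) : ℝ)) * x^n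
      / (n.factorial * (2^j * j.factorial)) with hfdef
  -- row sums
  have hrow_eq : ∀ n : ℕ, (fun j => f n j)
      = fun j => (x^n / n.factorial) *
        (((((2*j+1)^n : ℕ) : ℝ) - (n:ℝ) * (((2*j)^(n-1) : ℕ) : ℝ)) / (2^j * j.factorial)) := by
    intro n; funext j; simp only [hfdef]; ring
  have hrow_tsum : ∀ n : ℕ, ∑' j, f n j
      = Real.exp (1/2) * ((bellD n : ℝ) * x^n / n.factorial) := by
    intro n
    rw [hrow_eq n, tsum_mul_left, tsum_row n]
    ring
  have hsplit : ∀ p : ℕ × ℕ, Function.uncurry f p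
      = (((2*p.2+1)^p.1 : ℕ) : ℝ) * x^p.1 / (p.1.factorial * (2^p.2 * p.2.factorial))
        - (p.1:ℝ) * (((2*p.2)^(p.1-1) : ℕ) : ℝ) * x^p.1
            / (p.1.factorial * (2^p.2 * p.2.factorial)) := by
    intro p
    obtain ⟨n, j⟩ := p
    show f n j = (((2*j+1)^n : ℕ) : ℝ) * x^n / (n.factorial * (2^j * j.factorial))
        - (n:ℝ) * (((2*j)^(n-1) : ℕ) : ℝ) * x^n / (n.factorial * (2^j * j.factorial))
    simp only [hfdef]
    ring
  have hsumf : Summable (Function.uncurry f) := by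
    apply Summable.congr ((sum_F1 x).sub (sum_F2 x))
    intro p
    exact (hsplit p).symm
  -- column sums
  have hcol_tsum : ∀ j : ℕ, ∑' n, f n j
      = (Real.exp ((2*(j:ℝ)+1)*x) - x * Real.exp (2*(j:ℝ)*x)) / (2^j * j.factorial) := by
    intro j
    have h1 : ∀ n : ℕ, f n j
        = ((2*(j:ℝ)+1)^n * x^n / n.factorial
            - (n:ℝ) * (2*(j:ℝ))^(n-1) * x^n / n.factorial) / (2^j * j.factorial) := by
      intro n
      simp only [hfdef]
      push_cast
      ring
    simp only [h1]
    rw [tsum_div_const]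
    have hs1 : Summable (fun n : ℕ => (2*(j:ℝ)+1)^n * x^n / n.factorial) :=
      (tsum_col_pow (2*(j:ℝ)+1) x).1
    have hs2 : Summable (fun n : ℕ => (n:ℝ) * (2*(j:ℝ))^(n-1) * x^n / n.factorial) :=
      (tsum_col_deriv (2*(j:ℝ)) x).1
    rw [Summable.tsum_sub hs1 hs2, (tsum_col_pow (2*(j:ℝ)+1) x).2, (tsum_col_deriv (2*(j:ℝ)) x).2]
  -- exchange
  have hcomm : ∑' (j : ℕ) (n : ℕ), f n j = ∑' (n : ℕ) (j : ℕ), f n j := Summable.tsum_comm hsumf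
  -- compute column side
  have hcolsum : ∑' (j : ℕ) (n : ℕ), f n j
      = Real.exp (1/2) * (Real.exp ((Real.exp (2*x) - 1)/2) * (Real.exp x - x)) := by
    simp only [hcol_tsum]
    have hsplit2 : ∀ j : ℕ,
        (Real.exp ((2*(j:ℝ)+1)*x) - x * Real.exp (2*(j:ℝ)*x)) / (2^j * j.factorial)
        = Real.exp x * ((Real.exp (2*x))^j / (2^j * j.factorial))
          - x * ((Real.exp (2*x))^j / (2^j * j.factorial)) := by
      intro j
      rw [exp_odd_split j x, exp_even_split j x]
      ring
    simp only [hsplit2]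
    rw [Summable.tsum_sub ((summable_pow_div_two_pow_factorial (Real.exp (2*x))).mul_left _)
      ((summable_pow_div_two_pow_factorial (Real.exp (2*x))).mul_left _),
      tsum_mul_left, tsum_mul_left, tsum_pow_div_two_pow_factorial]
    rw [show Real.exp (2*x) / 2 = (Real.exp (2*x) - 1)/2 + 1/2 by ring, Real.exp_add]
    ring
  -- summability of the goal series
  have hmarg : Summable (fun n : ℕ => ∑' j, f n j) := hsumf.prod
  have hmarg' : Summable (fun n : ℕ =>
      Real.exp (1/2) * ((bellD n : ℝ) * x^n / n.factorial)) := by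
    apply hmarg.congr
    intro n
    exact hrow_tsum n
  have hgoal_sum : Summable (fun n : ℕ => (bellD n : ℝ) * x ^ n / (n.factorial : ℝ)) :=
    (summable_mul_left_iff hene).mp hmarg'
  refine ⟨hgoal_sum, ?_⟩
  have hrowsum : ∑' (n : ℕ) (j : ℕ), f n j
      = Real.exp (1/2) * ∑' n : ℕ, (bellD n : ℝ) * x^n / n.factorial := by
    simp only [hrow_tsum]
    rw [tsum_mul_left]
  have heq := hcomm
  rw [hcolsum, hrowsum] at heq
  have h := mul_left_cancel₀ hene heq
  rw [h]
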